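/- arXiv:2506.12852 — 3 statements merged into one kernel-verified Lean document; each statement's English description precedes it below -/
import Mathlib

section
/- Let p ≠ 0 be a homogeneous polynomial of degree d on ℝ^k. Then the set V = {y₀ ∈ ℝ^k : ord_p(y₀) ≥ d} is a linear subspace of ℝ^k, and p is invariant under translations by elements of V, i.e., p(y + y₀) = p(y) for all y ∈ ℝ^k and y₀ ∈ V. -/
open MvPolynomial

/-- The Taylor expansion of `p` about `y₀`, i.e. the polynomial `z ↦ p(z + y₀)`. -/
noncomputable def taylorShift {k : ℕ} (p : MvPolynomial (Fin k) ℝ) (y₀ : Fin k → ℝ) :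
    MvPolynomial (Fin k) ℝ :=
  aeval (fun i => X i + C (y₀ i)) p

/-- `ordGE p y₀ d` : the order of vanishing `ord_p(y₀)` of `p` at `y₀` (the degree of the
lowest-order nonzero term of the Taylor expansion of `p` about `y₀`) is at least `d`. -/
def ordGE {k : ℕ} (p : MvPolynomial (Fin k) ℝ) (y₀ : Fin k → ℝ) (d : ℕ) : Prop :=
  ∀ m ∈ (taylorShift p y₀).support, d ≤ m.sum fun _ e => e

/-! If `p` is homogeneous, rescaling shows that its periods `v` (those with
`p (x + v) = p x` for all `x`) form a subspace. If `ord_p(y₀) ≥ d`, the shifted polynomial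
`q = p (· + y₀)` has no terms of degree below `d`, and translation does not raise the total
degree, so `q` is homogeneous of degree `d` as well. Then
`p (2z + y₀) = q (2z) = 2^d q z = 2^d p (z + y₀) = p (2z + 2y₀)` makes `y₀` a period.
Conversely, for a period `q = p`, which is homogeneous of degree `d`. -/

namespace MvPolynomial

section Degree

variable {σ τ R : Type*} [CommSemiring R]

theorem totalDegree_aeval_le_of_totalDegree_le_one (f : σ → MvPolynomial τ R)
    (hf : ∀ i, (f i).totalDegree ≤ 1) (p : MvPolynomial σ R) :
    (aeval f p).totalDegree ≤ p.totalDegree := by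
  conv_lhs => rw [p.as_sum, map_sum]
  refine totalDegree_finsetSum_le fun m hm => ?_
  rw [aeval_monomial]
  calc _ ≤ (algebraMap R (MvPolynomial τ R) (coeff m p)).totalDegree
          + (m.prod fun i k => f i ^ k).totalDegree := totalDegree_mul _ _
    _ ≤ 0 + ∑ i ∈ m.support, m i * 1 := by
        gcongr
        · exact (totalDegree_C _).le
        · refine (totalDegree_finsetProd _ _).trans (Finset.sum_le_sum fun i _ => ?_)
          exact (totalDegree_pow _ _).trans (Nat.mul_le_mul_left _ (hf i))
    _ ≤ p.totalDegree := by simpa [Finsupp.sum] using le_totalDegree hm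

theorem isHomogeneous_of_totalDegree_le_of_le_degree {p : MvPolynomial σ R} {n : ℕ}
    (hdeg : p.totalDegree ≤ n) (hord : ∀ m ∈ p.support, n ≤ m.degree) :
    p.IsHomogeneous n := by
  intro m hm
  rw [Pi.one_def, ← Finsupp.degree_eq_weight_one]
  exact le_antisymm ((le_totalDegree (mem_support_iff.mpr hm)).trans hdeg)
    (hord m (mem_support_iff.mpr hm))

theorem IsHomogeneous.eval_smul {p : MvPolynomial σ R} {n : ℕ} (hp : p.IsHomogeneous n)
    (t : R) (x : σ → R) : eval (t • x) p = t ^ n * eval x p := by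
  rw [eval_eq, eval_eq, Finset.mul_sum]
  refine Finset.sum_congr rfl fun m hm => ?_
  simp only [Pi.smul_apply, smul_eq_mul, mul_pow, Finset.prod_mul_distrib,
    Finset.prod_pow_eq_pow_sum, ← hp.degree_eq_sum_deg_support hm]
  ring

end Degree

section Periods

variable {σ K : Type*} [Field K]

def IsHomogeneous.periods {p : MvPolynomial σ K} {n : ℕ} (hp : p.IsHomogeneous n) :
    Submodule K (σ → K) where
  carrier := {v | ∀ x, eval (x + v) p = eval x p}
  add_mem' {v w} hv hw x := by rw [← add_assoc, hw, hv]
  zero_mem' x := by rw [add_zero]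
  smul_mem' c v hv x := by
    rcases eq_or_ne c 0 with rfl | hc
    · rw [zero_smul, add_zero]
    · calc eval (x + c • v) p = eval (c • (c⁻¹ • x + v)) p := by
            rw [smul_add, smul_inv_smul₀ hc]
        _ = eval x p := by rw [hp.eval_smul, hv, ← hp.eval_smul, smul_inv_smul₀ hc]

theorem IsHomogeneous.mem_periods {p : MvPolynomial σ K} {n : ℕ} (hp : p.IsHomogeneous n)
    {v : σ → K} : v ∈ hp.periods ↔ ∀ x, eval (x + v) p = eval x p := Iff.rfl

end Periods

end MvPolynomial

section TaylorShift

variable {k : ℕ}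

theorem eval_taylorShift (p : MvPolynomial (Fin k) ℝ) (y₀ z : Fin k → ℝ) :
    eval z (taylorShift p y₀) = eval (z + y₀) p := by
  show aeval z (aeval _ p) = aeval (z + y₀) p
  rw [aeval_eq_bind₁, aeval_bind₁]
  simp [Pi.add_def]

theorem totalDegree_taylorShift_le (p : MvPolynomial (Fin k) ℝ) (y₀ : Fin k → ℝ) :
    (taylorShift p y₀).totalDegree ≤ p.totalDegree :=
  totalDegree_aeval_le_of_totalDegree_le_one _
    (fun i => (totalDegree_add _ _).trans (by simp [totalDegree_X, totalDegree_C])) p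

theorem ordGE_iff_isHomogeneous_taylorShift {p : MvPolynomial (Fin k) ℝ} {d : ℕ}
    (hp : p.IsHomogeneous d) (y₀ : Fin k → ℝ) :
    ordGE p y₀ d ↔ (taylorShift p y₀).IsHomogeneous d := by
  refine ⟨fun h => isHomogeneous_of_totalDegree_le_of_le_degree
    ((totalDegree_taylorShift_le p y₀).trans hp.totalDegree_le) h, fun h m hm => ?_⟩
  exact (h.degree_eq_sum_deg_support hm).le

theorem isHomogeneous_taylorShift_iff_mem_periods {p : MvPolynomial (Fin k) ℝ} {d : ℕ}
    (hp : p.IsHomogeneous d) (y₀ : Fin k → ℝ) :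
    (taylorShift p y₀).IsHomogeneous d ↔ y₀ ∈ hp.periods := by
  rw [hp.mem_periods]
  constructor
  · intro hq y
    set z : Fin k → ℝ := (2 : ℝ)⁻¹ • (y - y₀)
    have h2z : (2 : ℝ) • z = y - y₀ := by simp [z, smul_smul]
    have hscale := hq.eval_smul 2 z
    rw [eval_taylorShift, eval_taylorShift, ← hp.eval_smul, smul_add, h2z] at hscale
    rw [sub_add_cancel, two_smul, ← add_assoc, sub_add_cancel] at hscale
    exact hscale.symm
  · intro h
    have hshift : taylorShift p y₀ = p := MvPolynomial.funext fun z => by rw [eval_taylorShift, h]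
    rwa [hshift]

end TaylorShift

theorem high_order_set_is_subspace_and_translation_invariance_general {k : ℕ}
    (p : MvPolynomial (Fin k) ℝ) (d : ℕ) (hhom : p.IsHomogeneous d) :
    ∃ V : Submodule ℝ (Fin k → ℝ),
      (V : Set (Fin k → ℝ)) = {y₀ : Fin k → ℝ | ordGE p y₀ d} ∧
      ∀ y₀ ∈ V, ∀ y : Fin k → ℝ, eval (y + y₀) p = eval y p := by
  refine ⟨hhom.periods, ?_, fun y₀ h => h⟩
  ext y₀
  exact ((ordGE_iff_isHomogeneous_taylorShift hhom y₀).trans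
    (isHomogeneous_taylorShift_iff_mem_periods hhom y₀)).symm

/-- for a homogeneous polynomial `p ≠ 0` of degree `d` on `ℝᵏ`, the set
`V = {y₀ : ord_p(y₀) ≥ d}` is a linear subspace of `ℝᵏ`, and `p` is invariant under
translations by elements of `V`. -/
theorem high_order_set_is_subspace_and_translation_invariance {k : ℕ}
    (p : MvPolynomial (Fin k) ℝ) (hp : p ≠ 0) (d : ℕ) (hhom : p.IsHomogeneous d) :
    ∃ V : Submodule ℝ (Fin k → ℝ),
      (V : Set (Fin k → ℝ)) = {y₀ : Fin k → ℝ | ordGE p y₀ d} ∧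
      ∀ y₀ ∈ V, ∀ y : Fin k → ℝ, eval (y + y₀) p = eval y p :=
  high_order_set_is_subspace_and_translation_invariance_general p d hhom
end

section
/- Suppose ‖Σ ∩ B_ρ‖² := Σ_{d∈Γ} c_d² ρ^{n+2d} for ρ ∈ (0,R), with Γ ⊂ ℝ discrete and not all c_d zero. Define the decay order G(ρ) := 1 + (1/2)log₂((2ρ)^{−n−2} F(2ρ)) − (1/2)log₂(ρ^{−n−2} F(ρ)), where F(ρ) = Σ_d c_d² ρ^{n+2d}. Then ρ ↦ G(ρ) is non-decreasing on (0, R/2), and the limit lim_{ρ→0} G(ρ) equals d₀ := min{d ∈ Γ : c_d ≠ 0}. -/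
/-!
Write `F(ρ) = ∑ wᵢ ρ^{eᵢ}` with `wᵢ = c_d² ≥ 0` and `eᵢ = n + 2d`; then
`G(ρ) = (log₂ (F(2ρ) / F(ρ)) - n) / 2`.

For `0 < a ≤ b`, the inequality `F(2a) F(b) ≤ F(a) F(2b)` behind the monotonicity of
`F(2ρ) / F(ρ)` is Chebyshev's sum inequality for the weights `wᵢ a^{eᵢ}` and the similarly
ordered sequences `2^{eᵢ}` and `(b/a)^{eᵢ}`; this is the log-convexity of `t ↦ F(eᵗ)`.

As `ρ → 0⁺`, dominated convergence gives `ρ^{-(n + 2d₀)} F(ρ) → c_{d₀}² > 0`, so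
`F(2ρ) / F(ρ) → 2^{n + 2d₀}` and `G(ρ) → d₀`.
-/

open Set Filter Topology

theorem Monovary.tsum_mul_tsum_le_tsum_mul_tsum {ι : Type*} {p f g : ι → ℝ} (hfg : Monovary f g)
    (hp : 0 ≤ p) (hp_sum : Summable p) (hpf : Summable fun i => p i * f i)
    (hpg : Summable fun i => p i * g i) (hpfg : Summable fun i => p i * (f i * g i)) :
    (∑' i, p i * f i) * ∑' i, p i * g i ≤ (∑' i, p i) * ∑' i, p i * (f i * g i) := by
  have hswap {h : ι × ι → ℝ} (hh : Summable h) : Summable fun x : ι × ι => h x.swap :=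
    hh.comp_injective Prod.swap_injective
  have hsymm {h : ι × ι → ℝ} (hh : Summable h) : 2 * ∑' x, h x = ∑' x, (h x + h x.swap) := by
    rw [hh.tsum_add (hswap hh), ← (Equiv.prodComm ι ι).tsum_eq h]
    simp only [Equiv.prodComm_apply]
    ring
  have hA := summable_mul_of_summable_norm (f := fun i => p i * f i) hpf.norm hpg.norm
  have hB := summable_mul_of_summable_norm (f := p) hp_sum.norm hpfg.norm
  rw [tsum_mul_tsum_of_summable_norm hpf.norm hpg.norm,
    tsum_mul_tsum_of_summable_norm hp_sum.norm hpfg.norm, ← mul_le_mul_iff_right₀ two_pos,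
    hsymm hA, hsymm hB]
  refine (hA.add (hswap hA)).tsum_le_tsum (fun ⟨i, j⟩ => ?_) (hB.add (hswap hB))
  calc _ = p i * p j * (f i * g j + f j * g i) := by dsimp only [Prod.swap]; ring
    _ ≤ p i * p j * (f i * g i + f j * g j) :=
      mul_le_mul_of_nonneg_left (hfg.mul_add_mul_le_mul_add_mul i j) (mul_nonneg (hp i) (hp j))
    _ = _ := by dsimp only [Prod.swap]; ring

noncomputable def rpowSeries {ι : Type*} (w e : ι → ℝ) (ρ : ℝ) : ℝ := ∑' i, w i * ρ ^ e i

section rpowSeries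

variable {ι : Type*} {w e : ι → ℝ}

theorem rpowSeries_mul_rpowSeries_le (hw : 0 ≤ w) {a b l : ℝ} (ha : 0 < a) (hab : a ≤ b)
    (hl : 1 ≤ l) (hsa : Summable fun i => w i * a ^ e i) (hsb : Summable fun i => w i * b ^ e i)
    (hsla : Summable fun i => w i * (l * a) ^ e i)
    (hslb : Summable fun i => w i * (l * b) ^ e i) :
    rpowSeries w e (l * a) * rpowSeries w e b ≤ rpowSeries w e a * rpowSeries w e (l * b) := by
  have hba : 1 ≤ b / a := (one_le_div ha).2 hab
  have hmono : Monovary (fun i => l ^ e i) (fun i => (b / a) ^ e i) := fun i j hij =>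
    Real.rpow_le_rpow_of_exponent_le hl
      (lt_of_not_ge fun h => (Real.rpow_le_rpow_of_exponent_le hba h).not_gt hij).le
  have hf : ∀ i, w i * a ^ e i * l ^ e i = w i * (l * a) ^ e i := fun i => by
    rw [Real.mul_rpow (by linarith) ha.le]; ring
  have hg : ∀ i, w i * a ^ e i * (b / a) ^ e i = w i * b ^ e i := fun i => by
    rw [mul_assoc, ← Real.mul_rpow ha.le (by positivity), mul_div_cancel₀ _ ha.ne']
  have hfg : ∀ i, w i * a ^ e i * (l ^ e i * (b / a) ^ e i) = w i * (l * b) ^ e i := fun i => by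
    rw [← mul_assoc, hf, mul_assoc, ← Real.mul_rpow (by positivity) (by positivity),
      mul_assoc, mul_div_cancel₀ _ ha.ne']
  have := hmono.tsum_mul_tsum_le_tsum_mul_tsum (p := fun i => w i * a ^ e i)
    (fun i => mul_nonneg (hw i) (Real.rpow_nonneg ha.le _)) hsa (by simpa only [hf] using hsla)
    (by simpa only [hg] using hsb) (by simpa only [hfg] using hslb)
  simpa only [rpowSeries, hf, hg, hfg] using this

theorem rpowSeries_pos (hw : 0 ≤ w) {i₀ : ι} (hi₀ : 0 < w i₀) {ρ : ℝ} (hρ : 0 < ρ)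
    (hs : Summable fun i => w i * ρ ^ e i) : 0 < rpowSeries w e ρ :=
  hs.tsum_pos (fun i => mul_nonneg (hw i) (Real.rpow_nonneg hρ.le _)) i₀
    (mul_pos hi₀ (Real.rpow_pos_of_pos hρ _))

theorem monotoneOn_rpowSeries_mul_div (hw : 0 ≤ w) {i₀ : ι} (hi₀ : 0 < w i₀) {l R : ℝ}
    (hl : 1 ≤ l) (hs : ∀ ρ ∈ Ioo 0 R, Summable fun i => w i * ρ ^ e i) :
    MonotoneOn (fun ρ => rpowSeries w e (l * ρ) / rpowSeries w e ρ) (Ioo 0 (R / l)) := by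
  have hmem : ∀ ρ ∈ Ioo 0 (R / l), ρ ∈ Ioo 0 R ∧ l * ρ ∈ Ioo 0 R := fun ρ hρ => by
    have := (lt_div_iff₀' (by linarith)).1 hρ.2
    exact ⟨⟨hρ.1, by nlinarith [hρ.1]⟩, ⟨by nlinarith [hρ.1], this⟩⟩
  intro x hx y hy hxy
  rw [div_le_div_iff₀ (rpowSeries_pos hw hi₀ hx.1 (hs x (hmem x hx).1))
    (rpowSeries_pos hw hi₀ hy.1 (hs y (hmem y hy).1)), mul_comm (rpowSeries w e (l * y))]
  exact rpowSeries_mul_rpowSeries_le hw hx.1 hxy hl (hs x (hmem x hx).1) (hs y (hmem y hy).1)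
    (hs _ (hmem x hx).2) (hs _ (hmem y hy).2)

theorem rpowSeries_eq_rpow_mul {ρ : ℝ} (hρ : 0 < ρ) (a : ℝ) :
    rpowSeries w e ρ = ρ ^ a * rpowSeries w (fun i => e i - a) ρ := by
  rw [rpowSeries, rpowSeries, ← tsum_mul_left]
  congr 1 with i
  rw [Real.rpow_sub hρ]
  field_simp

theorem tendsto_rpowSeries_nhdsGT_zero (hw : 0 ≤ w) {i₀ : ι} (he₀ : e i₀ = 0)
    (he : ∀ i ≠ i₀, w i ≠ 0 → 0 < e i) {ρ₀ : ℝ} (hρ₀ : 0 < ρ₀)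
    (hs : Summable fun i => w i * ρ₀ ^ e i) :
    Tendsto (rpowSeries w e) (𝓝[>] 0) (𝓝 (w i₀)) := by
  classical
  have hlim (i : ι) :
      Tendsto (fun ρ => w i * ρ ^ e i) (𝓝[>] 0) (𝓝 (if i = i₀ then w i₀ else 0)) := by
    split_ifs with h
    · subst h
      simpa only [he₀, Real.rpow_zero, mul_one] using tendsto_const_nhds
    by_cases hwi : w i = 0
    · simpa only [hwi, zero_mul] using tendsto_const_nhds
    have hpos := he i h hwi
    simpa [Real.zero_rpow hpos.ne'] using
      ((Real.continuousAt_rpow_const 0 (e i) (.inr hpos.le)).tendsto.mono_left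
        nhdsWithin_le_nhds).const_mul (w i)
  have hbound : ∀ᶠ ρ in 𝓝[>] 0, ∀ i, ‖w i * ρ ^ e i‖ ≤ w i * ρ₀ ^ e i := by
    filter_upwards [Ioo_mem_nhdsGT hρ₀] with ρ hρ i
    rw [Real.norm_of_nonneg (mul_nonneg (hw i) (Real.rpow_nonneg hρ.1.le _))]
    by_cases hwi : w i = 0
    · simp [hwi]
    have he_nonneg : 0 ≤ e i := by
      rcases eq_or_ne i i₀ with rfl | h
      · exact he₀.ge
      · exact (he i h hwi).le
    exact mul_le_mul_of_nonneg_left (Real.rpow_le_rpow hρ.1.le hρ.2.le he_nonneg) (hw i)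
  have := tendsto_tsum_of_dominated_convergence hs hlim hbound
  rwa [tsum_ite_eq] at this

theorem tendsto_rpowSeries_mul_div_nhdsGT_zero (hw : 0 ≤ w) {i₀ : ι} (hi₀ : 0 < w i₀)
    (he : ∀ i ≠ i₀, w i ≠ 0 → e i₀ < e i) {ρ₀ : ℝ} (hρ₀ : 0 < ρ₀)
    (hs : Summable fun i => w i * ρ₀ ^ e i) {l : ℝ} (hl : 0 < l) :
    Tendsto (fun ρ => rpowSeries w e (l * ρ) / rpowSeries w e ρ) (𝓝[>] 0)
      (𝓝 (l ^ e i₀)) := by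
  have hs' : Summable fun i => w i * ρ₀ ^ (e i - e i₀) :=
    (hs.div_const (ρ₀ ^ e i₀)).congr fun i => by rw [Real.rpow_sub hρ₀]; ring
  have hU := tendsto_rpowSeries_nhdsGT_zero hw (sub_self (e i₀))
    (fun i hi hwi => sub_pos.2 (he i hi hwi)) hρ₀ hs'
  have hscale : Tendsto (fun ρ => l * ρ) (𝓝[>] 0) (𝓝[>] 0) := by
    refine tendsto_nhdsWithin_iff.2
      ⟨?_, eventually_nhdsWithin_of_forall fun ρ hρ => mul_pos hl hρ⟩
    simpa using ((continuous_const_mul l).tendsto 0).mono_left nhdsWithin_le_nhds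
  have hlim := ((hU.comp hscale).div hU hi₀.ne').const_mul (l ^ e i₀)
  rw [div_self hi₀.ne', mul_one] at hlim
  refine hlim.congr' ?_
  filter_upwards [self_mem_nhdsWithin] with ρ (hρ : 0 < ρ)
  have : ρ ^ e i₀ ≠ 0 := (Real.rpow_pos_of_pos hρ _).ne'
  rw [Pi.div_apply, Function.comp_apply, rpowSeries_eq_rpow_mul (e := e) (mul_pos hl hρ) (e i₀),
    rpowSeries_eq_rpow_mul (e := e) hρ (e i₀), Real.mul_rpow hl.le hρ.le]
  field_simp

end rpowSeries

theorem one_add_half_logb_sub_half_logb {n ρ x y : ℝ} (hρ : 0 < ρ) (hx : x ≠ 0) (hy : y ≠ 0) :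
    1 + 1 / 2 * Real.logb 2 ((2 * ρ) ^ (-n - 2) * y) - 1 / 2 * Real.logb 2 (ρ ^ (-n - 2) * x)
      = (Real.logb 2 (y / x) - n) / 2 := by
  rw [Real.logb_mul (Real.rpow_pos_of_pos (by positivity) _).ne' hy,
    Real.logb_mul (Real.rpow_pos_of_pos hρ _).ne' hx, Real.logb_div hy hx,
    Real.logb_rpow_eq_mul_logb_of_pos (by positivity), Real.logb_rpow_eq_mul_logb_of_pos hρ,
    Real.logb_mul two_ne_zero hρ.ne', Real.logb_self_eq_one one_lt_two]
  ring

theorem decay_order_monotone_and_limit_general (Γ : Set ℝ)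
    (c : ℝ → ℝ) (n R : ℝ) (hR : 0 < R)
    (hsum : ∀ ρ ∈ Set.Ioo (0 : ℝ) R, Summable fun d : Γ => (c d) ^ 2 * ρ ^ (n + 2 * (d : ℝ)))
    (d₀ : ℝ) (hd₀ : IsLeast {d : ℝ | d ∈ Γ ∧ c d ≠ 0} d₀) :
    let F : ℝ → ℝ := fun ρ => ∑' d : Γ, (c d) ^ 2 * ρ ^ (n + 2 * (d : ℝ))
    let G : ℝ → ℝ := fun ρ =>
      1 + (1 / 2) * Real.logb 2 ((2 * ρ) ^ (-n - 2) * F (2 * ρ))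
        - (1 / 2) * Real.logb 2 (ρ ^ (-n - 2) * F ρ)
    MonotoneOn G (Set.Ioo 0 (R / 2)) ∧
      Filter.Tendsto G (nhdsWithin 0 (Set.Ioi 0)) (nhds d₀) := by
  intro F G
  let w : Γ → ℝ := fun d => c d ^ 2
  let e : Γ → ℝ := fun d => n + 2 * d
  let i₀ : Γ := ⟨d₀, hd₀.1.1⟩
  have hw : 0 ≤ w := fun d => sq_nonneg _
  have hi₀ : 0 < w i₀ := pow_two_pos_of_ne_zero hd₀.1.2
  have he : ∀ d ≠ i₀, w d ≠ 0 → e i₀ < e d := fun d hd hwd => by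
    have : d₀ < d := (hd₀.2 ⟨d.2, fun h => hwd (by simp [w, h])⟩).lt_of_ne
      fun h => hd (Subtype.ext h.symm)
    simp only [e, i₀]
    linarith
  have hmem : ∀ ρ ∈ Ioo 0 (R / 2), ρ ∈ Ioo 0 R ∧ 2 * ρ ∈ Ioo 0 R := fun ρ hρ =>
    ⟨⟨hρ.1, by linarith [hρ.2]⟩, ⟨by linarith [hρ.1], by linarith [hρ.2]⟩⟩
  have hF_pos : ∀ ρ ∈ Ioo 0 R, 0 < F ρ := fun ρ hρ => rpowSeries_pos hw hi₀ hρ.1 (hsum ρ hρ)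
  have hG : ∀ ρ ∈ Ioo 0 (R / 2), G ρ = (Real.logb 2 (F (2 * ρ) / F ρ) - n) / 2 := fun ρ hρ =>
    one_add_half_logb_sub_half_logb hρ.1 (hF_pos ρ (hmem ρ hρ).1).ne' (hF_pos _ (hmem ρ hρ).2).ne'
  constructor
  · intro x hx y hy hxy
    have hratio : F (2 * x) / F x ≤ F (2 * y) / F y :=
      monotoneOn_rpowSeries_mul_div hw hi₀ one_le_two hsum hx hy hxy
    have := Real.logb_le_logb_of_le one_lt_two
      (div_pos (hF_pos _ (hmem x hx).2) (hF_pos x (hmem x hx).1)) hratio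
    rw [hG x hx, hG y hy]
    linarith
  · have hρ₀ : R / 2 ∈ Ioo 0 R := ⟨half_pos hR, half_lt_self hR⟩
    have hratio := tendsto_rpowSeries_mul_div_nhdsGT_zero hw hi₀ he hρ₀.1 (hsum _ hρ₀) two_pos
    have hlim : Tendsto (fun ρ => (Real.logb 2 (F (2 * ρ) / F ρ) - n) / 2) (𝓝[>] 0)
        (𝓝 ((Real.logb 2 (2 ^ e i₀) - n) / 2)) :=
      (((Real.continuousAt_logb (by positivity)).tendsto.comp hratio).sub_const n).div_const 2
    rw [Real.logb_rpow two_pos one_lt_two.ne', show (e i₀ - n) / 2 = d₀ by simp [e, i₀]] at hlim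
    refine hlim.congr' ?_
    filter_upwards [Ioo_mem_nhdsGT (half_pos hR)] with ρ hρ
    exact (hG ρ hρ).symm

/-- suppose `F(ρ) = Σ_{d∈Γ} c_d² ρ^{n+2d}` for `ρ ∈ (0,R)`, with `Γ ⊂ ℝ`
discrete, `(c_d)` nonnegative and not all zero (with least nonzero-coefficient degree
`d₀ = min {d ∈ Γ : c_d ≠ 0}`).  Then the decay order
`G(ρ) := 1 + ½ log₂((2ρ)^{−n−2} F(2ρ)) − ½ log₂(ρ^{−n−2} F(ρ))` is non-decreasing on
`(0, R/2)` and `G(ρ) → d₀` as `ρ → 0⁺`. -/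
theorem decay_order_monotone_and_limit (Γ : Set ℝ) (hΓ : DiscreteTopology Γ)
    (c : ℝ → ℝ) (hc : ∀ d, 0 ≤ c d) (n R : ℝ) (hR : 0 < R)
    (hsum : ∀ ρ ∈ Set.Ioo (0 : ℝ) R, Summable fun d : Γ => (c d) ^ 2 * ρ ^ (n + 2 * (d : ℝ)))
    (d₀ : ℝ) (hd₀ : IsLeast {d : ℝ | d ∈ Γ ∧ c d ≠ 0} d₀) :
    let F : ℝ → ℝ := fun ρ => ∑' d : Γ, (c d) ^ 2 * ρ ^ (n + 2 * (d : ℝ))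
    let G : ℝ → ℝ := fun ρ =>
      1 + (1 / 2) * Real.logb 2 ((2 * ρ) ^ (-n - 2) * F (2 * ρ))
        - (1 / 2) * Real.logb 2 (ρ ^ (-n - 2) * F ρ)
    MonotoneOn G (Set.Ioo 0 (R / 2)) ∧
      Filter.Tendsto G (nhdsWithin 0 (Set.Ioi 0)) (nhds d₀) :=
  decay_order_monotone_and_limit_general Γ c n R hR hsum d₀ hd₀
end

section
/- Suppose the function G from the preceding setting is constant equal to d on some sub-interval of (0, R/2). Then c_{d'} = 0 for all d' ≠ d; that is, F(ρ) = c_d² ρ^{n+2d} is a pure power. -/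
/-!
Write `F ρ = ρ ^ (n + 2d) * H ρ` with `H ρ = ∑ c_x² ρ ^ (2(x - d))`. On `(a, b)` the hypothesis
`G = d` says `F (2ρ) = 2 ^ (n + 2d) F ρ`, i.e. `H (2ρ) = H ρ`. But
`H (2ρ) - H ρ = ∑ c_x² ((2ρ) ^ e_x - ρ ^ e_x)` with `e_x = 2(x - d)`, and each
`ρ ↦ (2ρ) ^ e - ρ ^ e = (2 ^ e - 1) ρ ^ e` is nondecreasing on `(0, ∞)`, strictly increasing
when `e ≠ 0`. So a single `x ≠ d` with `c_x ≠ 0` makes `H (2ρ) - H ρ` strictly increasing on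
`(a, b)`, contradicting that it vanishes there.
-/

open Set Real

lemma strictMonoOn_rpow_mul_sub_rpow {k e : ℝ} (hk : 1 < k) (he : e ≠ 0) :
    StrictMonoOn (fun ρ : ℝ => (k * ρ) ^ e - ρ ^ e) (Ioi 0) := by
  intro s hs t ht hst
  have hs : 0 < s := hs
  simp only [mul_rpow (by linarith : 0 ≤ k) hs.le, mul_rpow (by linarith : 0 ≤ k) (hs.trans hst).le]
  rcases he.lt_or_gt with hneg | hpos
  · have hke : k ^ e < 1 := rpow_lt_one_of_one_lt_of_neg hk hneg
    nlinarith [rpow_lt_rpow_of_neg hs hst hneg]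
  · have hke : 1 < k ^ e := one_lt_rpow hk hpos
    nlinarith [rpow_lt_rpow hs.le hst hpos]

lemma monotoneOn_rpow_mul_sub_rpow {k : ℝ} (hk : 1 < k) (e : ℝ) :
    MonotoneOn (fun ρ : ℝ => (k * ρ) ^ e - ρ ^ e) (Ioi 0) := by
  rcases eq_or_ne e 0 with rfl | he
  · simp [monotoneOn_const]
  · exact (strictMonoOn_rpow_mul_sub_rpow hk he).monotoneOn

lemma tsum_mul_rpow_add {ι : Type*} (a e : ι → ℝ) (s : ℝ) {ρ : ℝ} (hρ : 0 < ρ) :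
    ∑' i, a i * ρ ^ (s + e i) = ρ ^ s * ∑' i, a i * ρ ^ e i := by
  rw [← tsum_mul_left]
  exact tsum_congr fun i => by rw [rpow_add hρ]; ring

lemma summable_mul_rpow_add_iff {ι : Type*} (a e : ι → ℝ) (s : ℝ) {ρ : ℝ} (hρ : 0 < ρ) :
    (Summable fun i => a i * ρ ^ (s + e i)) ↔ Summable fun i => a i * ρ ^ e i := by
  refine Iff.trans ?_ (summable_mul_left_iff (rpow_pos_of_pos hρ s).ne')
  exact summable_congr fun i => by rw [rpow_add hρ]; ring

noncomputable def decayOrder (n : ℝ) (F : ℝ → ℝ) (ρ : ℝ) : ℝ :=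
  1 + (1 / 2) * logb 2 ((2 * ρ) ^ (-n - 2) * F (2 * ρ)) - (1 / 2) * logb 2 (ρ ^ (-n - 2) * F ρ)

lemma decayOrder_eq {n ρ : ℝ} {F : ℝ → ℝ} (hρ : 0 < ρ) (hF₁ : 0 < F ρ) (hF₂ : 0 < F (2 * ρ)) :
    decayOrder n F ρ = -n / 2 + (1 / 2) * logb 2 (F (2 * ρ) / F ρ) := by
  rw [decayOrder, logb_mul (by positivity) hF₂.ne', logb_mul (by positivity) hF₁.ne',
    logb_div hF₂.ne' hF₁.ne', logb_rpow_eq_mul_logb_of_pos (by positivity),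
    logb_rpow_eq_mul_logb_of_pos hρ, logb_mul two_ne_zero hρ.ne', logb_self_eq_one one_lt_two]
  ring

lemma apply_two_mul_of_decayOrder_eq {n d ρ : ℝ} {F : ℝ → ℝ} (hρ : 0 < ρ) (hF₁ : 0 < F ρ)
    (hF₂ : 0 < F (2 * ρ)) (h : decayOrder n F ρ = d) :
    F (2 * ρ) = 2 ^ (n + 2 * d) * F ρ := by
  rw [decayOrder_eq hρ hF₁ hF₂] at h
  have hlogb : logb 2 (F (2 * ρ) / F ρ) = n + 2 * d := by linarith
  rw [logb_eq_iff_rpow_eq two_pos (by norm_num) (div_pos hF₂ hF₁)] at hlogb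
  rw [hlogb, div_mul_cancel₀ _ hF₁.ne']

lemma tsum_mul_rpow_mul_sub_rpow_lt {ι : Type*} {w e : ι → ℝ} {k s t : ℝ} (hk : 1 < k)
    (hw : ∀ i, 0 ≤ w i) {j : ι} (hwj : 0 < w j) (hej : e j ≠ 0) (hs : 0 < s) (hst : s < t)
    (hsum_s : Summable fun i => w i * ((k * s) ^ e i - s ^ e i))
    (hsum_t : Summable fun i => w i * ((k * t) ^ e i - t ^ e i)) :
    ∑' i, w i * ((k * s) ^ e i - s ^ e i) < ∑' i, w i * ((k * t) ^ e i - t ^ e i) := by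
  have ht : t ∈ Ioi (0 : ℝ) := hs.trans hst
  refine hsum_s.tsum_lt_tsum (i := j) (fun i => ?_) ?_ hsum_t
  · exact mul_le_mul_of_nonneg_left (monotoneOn_rpow_mul_sub_rpow hk (e i) hs ht hst.le) (hw i)
  · exact mul_lt_mul_of_pos_left (strictMonoOn_rpow_mul_sub_rpow hk hej hs ht hst) hwj

lemma tsum_mul_rpow_mul_sub_rpow_eq_zero {ι : Type*} {w e : ι → ℝ} {s k ρ : ℝ} (hk : 0 < k)
    (hρ : 0 < ρ) (hsum_kρ : Summable fun i => w i * (k * ρ) ^ e i)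
    (hsum_ρ : Summable fun i => w i * ρ ^ e i)
    (h : ∑' i, w i * (k * ρ) ^ (s + e i) = k ^ s * ∑' i, w i * ρ ^ (s + e i)) :
    ∑' i, w i * ((k * ρ) ^ e i - ρ ^ e i) = 0 := by
  have hkρ : 0 < k * ρ := mul_pos hk hρ
  rw [tsum_mul_rpow_add w e s hkρ, tsum_mul_rpow_add w e s hρ, mul_rpow hk.le hρ.le, mul_assoc,
    mul_right_inj' (rpow_pos_of_pos hk s).ne', mul_right_inj' (rpow_pos_of_pos hρ s).ne'] at h
  simp only [mul_sub]
  rw [hsum_kρ.tsum_sub hsum_ρ, h, sub_self]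

theorem decay_order_constant_implies_pure_power_general (Γ : Set ℝ)
    (c : ℝ → ℝ) (n R : ℝ)
    (hsum : ∀ ρ ∈ Set.Ioo (0 : ℝ) R, Summable fun d : Γ => (c d) ^ 2 * ρ ^ (n + 2 * (d : ℝ)))
    (F : ℝ → ℝ) (hF : ∀ ρ, F ρ = ∑' d : Γ, (c d) ^ 2 * ρ ^ (n + 2 * (d : ℝ)))
    (G : ℝ → ℝ)
    (hG : ∀ ρ, G ρ = 1 + (1 / 2) * Real.logb 2 ((2 * ρ) ^ (-n - 2) * F (2 * ρ))
        - (1 / 2) * Real.logb 2 (ρ ^ (-n - 2) * F ρ))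
    (d a b : ℝ) (ha : 0 < a) (hab : a < b) (hb : b ≤ R / 2)
    (hconst : ∀ ρ ∈ Set.Ioo a b, G ρ = d) :
    ∀ d' ∈ Γ, d' ≠ d → c d' = 0 := by
  intro d' hd' hd'd
  by_contra hc'
  set e : Γ → ℝ := fun x => 2 * ((x : ℝ) - d)
  have hexp : ∀ x : Γ, n + 2 * (x : ℝ) = n + 2 * d + e x := fun x => by ring
  simp only [hexp] at hsum hF
  have hmem : ∀ ρ ∈ Ioo a b, ρ ∈ Ioo 0 R ∧ 2 * ρ ∈ Ioo 0 R := fun ρ ⟨h₁, h₂⟩ =>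
    ⟨⟨by linarith, by linarith⟩, ⟨by linarith, by linarith⟩⟩
  have hsumH : ∀ ρ ∈ Ioo 0 R, Summable fun x : Γ => c x ^ 2 * ρ ^ e x := fun ρ hρ =>
    (summable_mul_rpow_add_iff _ e _ hρ.1).mp (hsum ρ hρ)
  have hFpos : ∀ ρ ∈ Ioo 0 R, 0 < F ρ := fun ρ hρ => by
    have : 0 < ρ := hρ.1
    rw [hF]
    exact (hsum ρ hρ).tsum_pos (fun _ => by positivity) ⟨d', hd'⟩ (by positivity)
  have hzero : ∀ ρ ∈ Ioo a b, ∑' x : Γ, c x ^ 2 * ((2 * ρ) ^ e x - ρ ^ e x) = 0 := by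
    intro ρ hρ
    obtain ⟨hρR, h2ρR⟩ := hmem ρ hρ
    have hscale := apply_two_mul_of_decayOrder_eq hρR.1 (hFpos _ hρR) (hFpos _ h2ρR)
      ((hG ρ).symm.trans (hconst ρ hρ))
    rw [hF, hF] at hscale
    exact tsum_mul_rpow_mul_sub_rpow_eq_zero two_pos hρR.1 (hsumH _ h2ρR) (hsumH _ hρR) hscale
  have hsumD : ∀ ρ ∈ Ioo a b, Summable fun x : Γ => c x ^ 2 * ((2 * ρ) ^ e x - ρ ^ e x) :=
    fun ρ hρ => by
      simpa only [mul_sub] using (hsumH _ (hmem ρ hρ).2).sub (hsumH _ (hmem ρ hρ).1)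
  obtain ⟨ρ₁, hρ₁⟩ := exists_between hab
  obtain ⟨ρ₂, hρ₂⟩ := exists_between hρ₁.2
  have hρ₂' : ρ₂ ∈ Ioo a b := ⟨hρ₁.1.trans hρ₂.1, hρ₂.2⟩
  have hlt := tsum_mul_rpow_mul_sub_rpow_lt (w := fun x : Γ => c x ^ 2) (e := e) one_lt_two
    (fun _ => sq_nonneg _) (j := ⟨d', hd'⟩) (by positivity)
    (by simpa [e, sub_eq_zero] using hd'd) (ha.trans hρ₁.1) hρ₂.1 (hsumD ρ₁ hρ₁) (hsumD ρ₂ hρ₂')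
  rw [hzero ρ₁ hρ₁, hzero ρ₂ hρ₂'] at hlt
  exact lt_irrefl 0 hlt

/-- in the setting of the decay order
`G(ρ) := 1 + ½ log₂((2ρ)^{−n−2} F(2ρ)) − ½ log₂(ρ^{−n−2} F(ρ))` with
`F(ρ) = Σ_{d∈Γ} c_d² ρ^{n+2d}` (`Γ ⊂ ℝ` discrete, `c_d ≥ 0` not all zero), if `G` is
constant equal to `d` on some sub-interval of `(0, R/2)`, then `c_{d'} = 0` for all
`d' ≠ d`; that is, `F(ρ) = c_d² ρ^{n+2d}` is a pure power. -/
theorem decay_order_constant_implies_pure_power (Γ : Set ℝ) (hΓ : DiscreteTopology Γ)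
    (c : ℝ → ℝ) (hc : ∀ d, 0 ≤ c d) (n R : ℝ) (hR : 0 < R)
    (hsum : ∀ ρ ∈ Set.Ioo (0 : ℝ) R, Summable fun d : Γ => (c d) ^ 2 * ρ ^ (n + 2 * (d : ℝ)))
    (hne : ∃ d ∈ Γ, c d ≠ 0)
    (F : ℝ → ℝ) (hF : ∀ ρ, F ρ = ∑' d : Γ, (c d) ^ 2 * ρ ^ (n + 2 * (d : ℝ)))
    (G : ℝ → ℝ)
    (hG : ∀ ρ, G ρ = 1 + (1 / 2) * Real.logb 2 ((2 * ρ) ^ (-n - 2) * F (2 * ρ))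
        - (1 / 2) * Real.logb 2 (ρ ^ (-n - 2) * F ρ))
    (d a b : ℝ) (ha : 0 < a) (hab : a < b) (hb : b ≤ R / 2)
    (hconst : ∀ ρ ∈ Set.Ioo a b, G ρ = d) :
    ∀ d' ∈ Γ, d' ≠ d → c d' = 0 :=
  decay_order_constant_implies_pure_power_general Γ c n R hsum F hF G hG d a b ha hab hb hconst
end
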